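/- Let N be a normal subgroup of a group G. If G is a Powers group, then N is a Powers group. -/
import Mathlib


/-- A group `G` is a *Powers group* if for every finite subset `F` of `G \ {e}` and every
integer `k ≥ 1` there exist a partition `G = D ⊔ E` and elements `g 1, …, g k ∈ G` such that
`f D ∩ D = ∅` for all `f ∈ F` and `g i E ∩ g j E = ∅` for all distinct `1 ≤ i, j ≤ k`. -/
def IsPowersGroup (G : Type*) [Group G] : Prop :=
  ∀ F : Finset G, (1 : G) ∉ F → ∀ k : ℕ, 1 ≤ k →
    ∃ (D E : Set G) (g : ℕ → G),
      D ∪ E = Set.univ ∧ D ∩ E = ∅ ∧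
      (∀ f ∈ F, ((fun x => f * x) '' D) ∩ D = ∅) ∧
      (∀ i j, 1 ≤ i → i ≤ k → 1 ≤ j → j ≤ k → i ≠ j →
        ((fun x => g i * x) '' E) ∩ ((fun x => g j * x) '' E) = ∅)

/-- Let `N` be a normal subgroup of a group `G`. If `G` is a Powers group,
then `N` is a Powers group. -/
theorem powers_of_normal {G : Type*} [Group G] (N : Subgroup G) (hN : N.Normal)
    (hG : IsPowersGroup G) : IsPowersGroup ↥N := by
  classical
  intro F hF k hk
  rcases F.eq_empty_or_nonempty with hFe | ⟨f₀, hf₀⟩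
  · refine ⟨Set.univ, ∅, fun _ => 1, by simp, by simp, ?_, ?_⟩
    · intro f hf; rw [hFe] at hf; exact absurd hf (Finset.notMem_empty f)
    · intro i j _ _ _ _ _; simp
  · have h1 : (1 : G) ∉ F.image (Subtype.val : ↥N → G) := by
      intro h
      rcases Finset.mem_image.mp h with ⟨a, ha, hav⟩
      apply hF
      have : a = (1 : ↥N) := Subtype.ext (by simpa using hav)
      rwa [this] at ha
    obtain ⟨D, E, g, hunion, hdisj, hFD, hgE⟩ :=
      hG (F.image Subtype.val) h1 (k + 1) (by omega)
    set c : ℕ → G := fun i => (g 1)⁻¹ * g (i + 1) with hc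
    have hmem : ∀ i, c i * (f₀ : G) * (c i)⁻¹ ∈ N := fun i => hN.conj_mem _ f₀.2 _
    refine ⟨Subtype.val ⁻¹' D, Subtype.val ⁻¹' E,
      fun i => ⟨c i * (f₀ : G) * (c i)⁻¹, hmem i⟩, ?_, ?_, ?_, ?_⟩
    · ext x
      simp only [Set.mem_union, Set.mem_preimage, Set.mem_univ, iff_true]
      have := Set.ext_iff.mp hunion (x : G)
      simpa [Set.mem_union] using this.mpr trivial
    · rw [Set.eq_empty_iff_forall_notMem]
      intro x hx
      exact Set.eq_empty_iff_forall_notMem.mp hdisj (x : G) ⟨hx.1, hx.2⟩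
    · intro f hf
      rw [Set.eq_empty_iff_forall_notMem]
      rintro x ⟨⟨y, hy, hyx⟩, hxD⟩
      have hfD := hFD (f : G) (Finset.mem_image_of_mem _ hf)
      apply Set.eq_empty_iff_forall_notMem.mp hfD (x : G)
      refine ⟨⟨(y : G), hy, ?_⟩, hxD⟩
      have := congrArg (Subtype.val : ↥N → G) hyx
      simpa using this
    · intro i j hi1 hik hj1 hjk hij
      have key : ∀ (t : ℕ), 1 ≤ t → t ≤ k → ∀ u : G, u ∈ E →
          ∃ e ∈ E, (c t * (f₀ : G) * (c t)⁻¹) * u = (g 1)⁻¹ * (g (t + 1) * e) := by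
        intro t ht1 htk u hu
        have hv : (g (t + 1))⁻¹ * (g 1 * u) ∈ D := by
          by_contra hvE
          have hvE' : (g (t + 1))⁻¹ * (g 1 * u) ∈ E := by
            have := (Set.ext_iff.mp hunion ((g (t + 1))⁻¹ * (g 1 * u))).mpr trivial
            rcases this with h | h
            · exact absurd h hvE
            · exact h
          have hd := hgE 1 (t + 1) le_rfl (by omega) (by omega) (by omega) (by omega)
          apply Set.eq_empty_iff_forall_notMem.mp hd (g 1 * u)
          exact ⟨⟨u, hu, rfl⟩, ⟨(g (t + 1))⁻¹ * (g 1 * u), hvE', by group⟩⟩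
        have hf₀D := hFD (f₀ : G) (Finset.mem_image_of_mem _ hf₀)
        have he : (f₀ : G) * ((g (t + 1))⁻¹ * (g 1 * u)) ∈ E := by
          by_contra heE
          have heD : (f₀ : G) * ((g (t + 1))⁻¹ * (g 1 * u)) ∈ D := by
            have := (Set.ext_iff.mp hunion ((f₀ : G) * ((g (t + 1))⁻¹ * (g 1 * u)))).mpr trivial
            rcases this with h | h
            · exact h
            · exact absurd h heE
          apply Set.eq_empty_iff_forall_notMem.mp hf₀D
            ((f₀ : G) * ((g (t + 1))⁻¹ * (g 1 * u)))
          exact ⟨⟨_, hv, rfl⟩, heD⟩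
        refine ⟨_, he, ?_⟩
        simp only [hc]
        group
      rw [Set.eq_empty_iff_forall_notMem]
      rintro x ⟨⟨y, hy, hyx⟩, ⟨z, hz, hzx⟩⟩
      obtain ⟨e₁, he₁, heq₁⟩ := key i hi1 hik (y : G) hy
      obtain ⟨e₂, he₂, heq₂⟩ := key j hj1 hjk (z : G) hz
      have hx1 : (x : G) = (g 1)⁻¹ * (g (i + 1) * e₁) := by
        rw [← heq₁]
        have := congrArg (Subtype.val : ↥N → G) hyx
        simpa using this.symm
      have hx2 : (x : G) = (g 1)⁻¹ * (g (j + 1) * e₂) := by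
        rw [← heq₂]
        have := congrArg (Subtype.val : ↥N → G) hzx
        simpa using this.symm
      have hgg : g (i + 1) * e₁ = g (j + 1) * e₂ := mul_left_cancel (hx1.symm.trans hx2)
      have hd2 := hgE (i + 1) (j + 1) (by omega) (by omega) (by omega) (by omega) (by omega)
      apply Set.eq_empty_iff_forall_notMem.mp hd2 (g (i + 1) * e₁)
      exact ⟨⟨e₁, he₁, rfl⟩, ⟨e₂, he₂, hgg.symm⟩⟩
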